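/- arXiv:2408.02183 — 2 statements merged into one kernel-verified Lean document; each statement's English description precedes it below -/
import Mathlib

section
/- Let $\bar{\rho}(z,t) = (1+z^2)^{1/2} \cdot \min\{(1+z^2)^{1/2}, t\}$ for $z \in \mathbb{R}$ and $t \geq 0$. Then for all $a, b \geq 0$ and all $t \geq 0$, one has $\bar{\rho}(a,t) + \bar{\rho}(b,t) \geq \bar{\rho}(\sqrt{a^2+b^2}, t)$. -/
/-!
Writing `g x = x * min x t`, we have `rhoBar z t = g (√(1 + z²))`, and the three arguments
`A = √(1 + a²)`, `B = √(1 + b²)`, `C = √(1 + a² + b²)` satisfy `C² ≤ A² + B²`. For `t ≥ 0` the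
function `g` is monotone on `[0, ∞)` and `g C ≤ g A + g B` whenever `C² ≤ A² + B²`: once `A, B ≤ C`,
each of the four ways of resolving the minima on the right reduces to `C ≤ A + B`,
`C² ≤ A² + B²`, or `(C - B) t ≤ (C - B) B ≤ C² - B² ≤ A²` (and symmetrically).
-/

noncomputable def rhoBar (z t : ℝ) : ℝ :=
  Real.sqrt (1 + z ^ 2) * min (Real.sqrt (1 + z ^ 2)) t

theorem mul_min_self_le_mul_min_self {t x y : ℝ} (ht : 0 ≤ t) (hx : 0 ≤ x) (hxy : x ≤ y) :
    x * min x t ≤ y * min y t :=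
  mul_le_mul hxy (min_le_min_right t hxy) (le_min hx ht) (hx.trans hxy)

theorem mul_min_self_le_add_of_sq_le_add_sq {A B C t : ℝ} (hA : 0 ≤ A) (hB : 0 ≤ B)
    (hC : 0 ≤ C) (ht : 0 ≤ t) (h : C ^ 2 ≤ A ^ 2 + B ^ 2) :
    C * min C t ≤ A * min A t + B * min B t := by
  have hA' : 0 ≤ A * min A t := mul_nonneg hA (le_min hA ht)
  have hB' : 0 ≤ B * min B t := mul_nonneg hB (le_min hB ht)
  rcases le_total C A with hCA | hAC
  · linarith [mul_min_self_le_mul_min_self ht hC hCA]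
  rcases le_total C B with hCB | hBC
  · linarith [mul_min_self_le_mul_min_self ht hC hCB]
  rcases le_total C t with hCt | hCt
  · rw [min_eq_left hCt, min_eq_left (hAC.trans hCt), min_eq_left (hBC.trans hCt)]
    nlinarith
  rw [min_eq_right hCt]
  have hCAB : C ≤ A + B := by nlinarith
  rcases le_total A t with hAt | hAt <;> rcases le_total B t with hBt | hBt <;>
    simp only [min_eq_left, min_eq_right, *]
  · nlinarith
  · nlinarith [mul_le_mul_of_nonneg_left hBt (sub_nonneg.2 hBC)]
  · nlinarith [mul_le_mul_of_nonneg_left hAt (sub_nonneg.2 hAC)]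
  · nlinarith

theorem stmt0_general (a b t : ℝ) (ht : 0 ≤ t) :
    rhoBar (Real.sqrt (a ^ 2 + b ^ 2)) t ≤ rhoBar a t + rhoBar b t := by
  unfold rhoBar
  apply mul_min_self_le_add_of_sq_le_add_sq (Real.sqrt_nonneg _) (Real.sqrt_nonneg _)
    (Real.sqrt_nonneg _) ht
  rw [Real.sq_sqrt (by positivity), Real.sq_sqrt (by positivity), Real.sq_sqrt (by positivity),
    Real.sq_sqrt (by positivity)]
  linarith

theorem stmt0 (a b t : ℝ) (ha : 0 ≤ a) (hb : 0 ≤ b) (ht : 0 ≤ t) :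
    rhoBar (Real.sqrt (a ^ 2 + b ^ 2)) t ≤ rhoBar a t + rhoBar b t :=
  stmt0_general a b t ht
end

section
/- Let $\nu_0 > 0$, $\alpha > 0$, $\rho > 0$, and $t \geq 0$, $x \in \mathbb{R}^3$. Then $\int_0^t e^{-\frac{\nu_0}{2}(t-\tau)} \sup_{y \in \mathbb{R}^3} \left[ e^{-\frac{\nu_0}{2}(t-\tau+|x-y|)}(1+\tau)^{-\alpha}\left(1+\frac{|y|^2}{1+\tau}\right)^{-\rho} \right] d\tau \leq C_{\alpha,\rho} (1+t)^{-\alpha}\left(1+\frac{|x|^2}{1+t}\right)^{-\rho}$ for some constant $C_{\alpha,\rho} > 0$ depending only on $\alpha, \rho, \nu_0$. -/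
/-!
Bound the integrand pointwise in `τ`. In the supremum over `y`, either `‖y‖ ≥ ‖x‖ / 2`, and then
`(1 + ‖y‖² / T)^(-ρ) ≤ 4^ρ (1 + ‖x‖² / T)^(-ρ)`, or `‖x - y‖ ≥ ‖x‖ / 2`, and then the factor
`e^{-ν‖x - y‖} ≤ e^{-ν‖x‖/2}` beats every power of `1 + ‖x‖`. Since `1 + t ≤ (1 + τ)(1 + (t - τ))`,
moving the algebraic weight from time `τ` to time `t` costs a factor `(1 + (t - τ))^(α + ρ)`,
which one of the two factors `e^{-ν₀(t - τ)/2}` absorbs; the other integrates to at most `2 / ν₀`.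
-/

open MeasureTheory Real Set

theorem rpow_neg_le_rpow_mul_rpow_neg {a b c γ : ℝ} (ha : 0 < a) (hb : 0 < b) (hc : 0 < c)
    (hγ : 0 ≤ γ) (h : a ≤ b * c) : b ^ (-γ) ≤ c ^ γ * a ^ (-γ) :=
  calc b ^ (-γ) = c ^ γ * (b * c) ^ (-γ) := by
        rw [mul_rpow hb.le hc.le, rpow_neg hc.le]
        field_simp
    _ ≤ c ^ γ * a ^ (-γ) :=
        mul_le_mul_of_nonneg_left (rpow_le_rpow_of_nonpos ha h (neg_nonpos.2 hγ)) (by positivity)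

theorem rpow_neg_mul_rpow_neg_le {α ρ X τ t : ℝ} (hα : 0 ≤ α) (hρ : 0 ≤ ρ) (hX : 0 ≤ X)
    (hτ : 0 ≤ τ) (hτt : τ ≤ t) :
    (1 + τ) ^ (-α) * (1 + X / (1 + τ)) ^ (-ρ) ≤
      (1 + (t - τ)) ^ (α + ρ) * ((1 + t) ^ (-α) * (1 + X / (1 + t)) ^ (-ρ)) := by
  have hτ1 : 0 < 1 + τ := by linarith
  have ht1 : 0 < 1 + t := by linarith
  have hs : 0 < 1 + (t - τ) := by linarith
  have h1 : (1 + τ) ^ (-α) ≤ (1 + (t - τ)) ^ α * (1 + t) ^ (-α) :=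
    rpow_neg_le_rpow_mul_rpow_neg ht1 hτ1 hs hα (by nlinarith)
  have h2 : (1 + X / (1 + τ)) ^ (-ρ) ≤ (1 + (t - τ)) ^ ρ * (1 + X / (1 + t)) ^ (-ρ) := by
    refine rpow_neg_le_rpow_mul_rpow_neg (by positivity) (by positivity) hs hρ ?_
    have : X / (1 + t) ≤ X / (1 + τ) := by gcongr
    nlinarith [div_nonneg hX hτ1.le]
  calc (1 + τ) ^ (-α) * (1 + X / (1 + τ)) ^ (-ρ)
      ≤ ((1 + (t - τ)) ^ α * (1 + t) ^ (-α)) * ((1 + (t - τ)) ^ ρ * (1 + X / (1 + t)) ^ (-ρ)) :=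
        mul_le_mul h1 h2 (by positivity) (by positivity)
    _ = _ := by rw [rpow_add hs]; ring

theorem one_add_rpow_le_mul_exp {c β : ℝ} (hc : 0 < c) (hβ : 0 < β) :
    ∃ K > 0, ∀ s : ℝ, 0 ≤ s → (1 + s) ^ β ≤ K * exp (c * s) := by
  set L := max 1 (β / c)
  have hL : 0 < L := lt_max_of_lt_left one_pos
  refine ⟨L ^ β, rpow_pos_of_pos hL β, fun s hs => ?_⟩
  have hlin : 1 + s ≤ L * exp (c * s / β) := by
    have h1 : 1 ≤ L := le_max_left _ _
    have h2 : β / c ≤ L := le_max_right _ _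
    have h3 : c * s / β + 1 ≤ exp (c * s / β) := add_one_le_exp _
    have h4 : s = β / c * (c * s / β) := by field_simp
    have h5 : 0 ≤ c * s / β := by positivity
    nlinarith
  calc (1 + s) ^ β ≤ (L * exp (c * s / β)) ^ β := by gcongr
    _ = L ^ β * exp (c * s) := by
      rw [mul_rpow hL.le (exp_pos _).le, ← exp_mul, div_mul_cancel₀ _ hβ.ne']

theorem exp_neg_mul_le_mul_rpow_neg {c ρ : ℝ} (hc : 0 < c) (hρ : 0 < ρ) :
    ∃ K > 0, ∀ T : ℝ, 1 ≤ T → ∀ r : ℝ, 0 ≤ r → exp (-c * r) ≤ K * (1 + r ^ 2 / T) ^ (-ρ) := by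
  obtain ⟨K, hK, hbound⟩ := one_add_rpow_le_mul_exp hc (by positivity : 0 < 2 * ρ)
  refine ⟨K, hK, fun T hT r hr => ?_⟩
  have hT0 : 0 < T := by linarith
  have hr1 : 0 < 1 + r := by linarith
  have hexp : exp (-c * r) ≤ K * (1 + r) ^ (-(2 * ρ)) := by
    rw [neg_mul, exp_neg, rpow_neg hr1.le, ← div_eq_mul_inv, inv_eq_one_div,
      div_le_div_iff₀ (exp_pos _) (by positivity), one_mul]
    exact hbound r hr
  have hsq : (1 + r) ^ (-(2 * ρ)) ≤ (1 + r ^ 2 / T) ^ (-ρ) := by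
    rw [show -(2 * ρ) = 2 * -ρ by ring, rpow_mul hr1.le, rpow_two]
    refine rpow_le_rpow_of_nonpos (by positivity) ?_ (by linarith)
    have : r ^ 2 / T ≤ r ^ 2 := div_le_self (by positivity) hT
    nlinarith
  calc exp (-c * r) ≤ K * (1 + r) ^ (-(2 * ρ)) := hexp
    _ ≤ K * (1 + r ^ 2 / T) ^ (-ρ) := mul_le_mul_of_nonneg_left hsq hK.le

theorem exp_neg_mul_norm_sub_mul_rpow_neg_le {E : Type*} [SeminormedAddCommGroup E] {ν ρ : ℝ}
    (hν : 0 < ν) (hρ : 0 < ρ) :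
    ∃ M > 0, ∀ T : ℝ, 1 ≤ T → ∀ x y : E,
      exp (-ν * ‖x - y‖) * (1 + ‖y‖ ^ 2 / T) ^ (-ρ) ≤ M * (1 + ‖x‖ ^ 2 / T) ^ (-ρ) := by
  obtain ⟨K, hK, hdecay⟩ := exp_neg_mul_le_mul_rpow_neg (half_pos hν) hρ
  refine ⟨max K (4 ^ ρ), lt_max_of_lt_left hK, fun T hT x y => ?_⟩
  have hT0 : 0 < T := by linarith
  have hy : 0 < 1 + ‖y‖ ^ 2 / T := by positivity
  have hx : 0 < 1 + ‖x‖ ^ 2 / T := by positivity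
  rcases le_or_gt ‖x‖ (2 * ‖y‖) with hnear | hfar
  · have hexp : exp (-ν * ‖x - y‖) ≤ 1 := exp_le_one_iff.2 (by nlinarith [norm_nonneg (x - y)])
    have hweight : (1 + ‖y‖ ^ 2 / T) ^ (-ρ) ≤ 4 ^ ρ * (1 + ‖x‖ ^ 2 / T) ^ (-ρ) := by
      refine rpow_neg_le_rpow_mul_rpow_neg hx hy (by norm_num) hρ.le ?_
      have : ‖x‖ ^ 2 / T ≤ 4 * (‖y‖ ^ 2 / T) := by
        rw [mul_div_assoc']; gcongr; nlinarith [norm_nonneg x]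
      nlinarith [div_nonneg (sq_nonneg ‖y‖) hT0.le]
    calc exp (-ν * ‖x - y‖) * (1 + ‖y‖ ^ 2 / T) ^ (-ρ)
        ≤ 1 * (4 ^ ρ * (1 + ‖x‖ ^ 2 / T) ^ (-ρ)) :=
          mul_le_mul hexp hweight (by positivity) zero_le_one
      _ ≤ max K (4 ^ ρ) * (1 + ‖x‖ ^ 2 / T) ^ (-ρ) := by
          rw [one_mul]; gcongr; exact le_max_right _ _
  · have hexp : exp (-ν * ‖x - y‖) ≤ exp (-(ν / 2) * ‖x‖) := by
      refine exp_le_exp.2 ?_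
      nlinarith [norm_sub_norm_le x y]
    have hweight : (1 + ‖y‖ ^ 2 / T) ^ (-ρ) ≤ 1 :=
      rpow_le_one_of_one_le_of_nonpos (by simp; positivity) (by linarith)
    calc exp (-ν * ‖x - y‖) * (1 + ‖y‖ ^ 2 / T) ^ (-ρ)
        ≤ exp (-(ν / 2) * ‖x‖) * 1 := mul_le_mul hexp hweight (by positivity) (by positivity)
      _ ≤ K * (1 + ‖x‖ ^ 2 / T) ^ (-ρ) := by rw [mul_one]; exact hdecay T hT _ (norm_nonneg x)
      _ ≤ max K (4 ^ ρ) * (1 + ‖x‖ ^ 2 / T) ^ (-ρ) := by gcongr; exact le_max_left _ _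

theorem exp_mul_iSup_le {E : Type*} [SeminormedAddCommGroup E] {ν α ρ : ℝ}
    (hν : 0 < ν) (hα : 0 ≤ α) (hρ : 0 < ρ) :
    ∃ C > 0, ∀ t τ : ℝ, 0 ≤ τ → τ ≤ t → ∀ x : E,
      exp (-ν * (t - τ)) *
          ⨆ y : E, exp (-ν * (t - τ + ‖x - y‖)) * (1 + τ) ^ (-α) *
            (1 + ‖y‖ ^ 2 / (1 + τ)) ^ (-ρ) ≤
        C * exp (-ν * (t - τ)) * ((1 + t) ^ (-α) * (1 + ‖x‖ ^ 2 / (1 + t)) ^ (-ρ)) := by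
  obtain ⟨M, hM, hspace⟩ := exp_neg_mul_norm_sub_mul_rpow_neg_le (E := E) hν hρ
  obtain ⟨K, hK, hgrowth⟩ := one_add_rpow_le_mul_exp hν (by positivity : 0 < α + ρ)
  refine ⟨M * K, by positivity, fun t τ hτ hτt x => ?_⟩
  have hT : 1 ≤ 1 + τ := by linarith
  have hsup : (⨆ y : E, exp (-ν * (t - τ + ‖x - y‖)) * (1 + τ) ^ (-α) *
      (1 + ‖y‖ ^ 2 / (1 + τ)) ^ (-ρ)) ≤
      exp (-ν * (t - τ)) * M * ((1 + τ) ^ (-α) * (1 + ‖x‖ ^ 2 / (1 + τ)) ^ (-ρ)) := by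
    refine ciSup_le fun y => ?_
    calc exp (-ν * (t - τ + ‖x - y‖)) * (1 + τ) ^ (-α) * (1 + ‖y‖ ^ 2 / (1 + τ)) ^ (-ρ)
        = exp (-ν * (t - τ)) * (1 + τ) ^ (-α) *
            (exp (-ν * ‖x - y‖) * (1 + ‖y‖ ^ 2 / (1 + τ)) ^ (-ρ)) := by
          rw [mul_add, exp_add]; ring
      _ ≤ exp (-ν * (t - τ)) * (1 + τ) ^ (-α) * (M * (1 + ‖x‖ ^ 2 / (1 + τ)) ^ (-ρ)) :=
          mul_le_mul_of_nonneg_left (hspace _ hT x y) (by positivity)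
      _ = _ := by ring
  have ht : 0 < 1 + t := by linarith
  have hw : 0 ≤ (1 + t) ^ (-α) * (1 + ‖x‖ ^ 2 / (1 + t)) ^ (-ρ) := by positivity
  set w := (1 + t) ^ (-α) * (1 + ‖x‖ ^ 2 / (1 + t)) ^ (-ρ)
  have hcancel : exp (-ν * (t - τ)) * exp (ν * (t - τ)) = 1 := by rw [← exp_add]; simp
  calc exp (-ν * (t - τ)) * ⨆ y : E, exp (-ν * (t - τ + ‖x - y‖)) * (1 + τ) ^ (-α) *
          (1 + ‖y‖ ^ 2 / (1 + τ)) ^ (-ρ)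
      ≤ exp (-ν * (t - τ)) * (exp (-ν * (t - τ)) * M * ((1 + (t - τ)) ^ (α + ρ) * w)) := by
        grw [hsup, rpow_neg_mul_rpow_neg_le hα hρ.le (sq_nonneg ‖x‖) hτ hτt]
    _ ≤ exp (-ν * (t - τ)) * (exp (-ν * (t - τ)) * M * (K * exp (ν * (t - τ)) * w)) := by
        grw [hgrowth (t - τ) (by linarith)]
    _ = M * K * exp (-ν * (t - τ)) * w := by
        linear_combination (M * K * exp (-ν * (t - τ)) * w) * hcancel

theorem integral_exp_neg_mul_sub_le {c t : ℝ} (hc : 0 < c) :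
    ∫ τ in (0 : ℝ)..t, exp (-c * (t - τ)) ≤ c⁻¹ := by
  rw [intervalIntegral.integral_comp_sub_left (fun s => exp (-c * s)),
    intervalIntegral.integral_comp_mul_left (fun s => exp s) (neg_ne_zero.2 hc.ne'), integral_exp]
  simp only [sub_self, sub_zero, mul_zero, exp_zero, smul_eq_mul]
  rw [inv_neg, neg_mul, ← mul_neg, neg_sub]
  exact mul_le_of_le_one_right (inv_nonneg.2 hc.le) (by linarith [exp_pos (-c * t)])

theorem intervalIntegral_mono_on_of_nonneg {f g : ℝ → ℝ} {a b : ℝ} (hab : a ≤ b)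
    (hg : IntervalIntegrable g volume a b) (hg0 : ∀ x ∈ Icc a b, 0 ≤ g x)
    (hfg : ∀ x ∈ Icc a b, f x ≤ g x) :
    ∫ x in a..b, f x ≤ ∫ x in a..b, g x := by
  by_cases hf : IntervalIntegrable f volume a b
  · exact intervalIntegral.integral_mono_on hab hf hg hfg
  · rw [intervalIntegral.integral_undef hf]
    exact intervalIntegral.integral_nonneg hab hg0

theorem stmt12 (ν0 α ρ : ℝ) (hν0 : 0 < ν0) (hα : 0 < α) (hρ : 0 < ρ) :
    ∃ C : ℝ, 0 < C ∧ ∀ t : ℝ, 0 ≤ t → ∀ x : EuclideanSpace ℝ (Fin 3),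
      (∫ τ in (0 : ℝ)..t, Real.exp (-(ν0 / 2) * (t - τ)) *
          ⨆ y : EuclideanSpace ℝ (Fin 3),
            Real.exp (-(ν0 / 2) * (t - τ + ‖x - y‖)) * (1 + τ) ^ (-α) *
              (1 + ‖y‖ ^ 2 / (1 + τ)) ^ (-ρ)) ≤
        C * (1 + t) ^ (-α) * (1 + ‖x‖ ^ 2 / (1 + t)) ^ (-ρ) := by
  obtain ⟨C, hC, hbound⟩ :=
    exp_mul_iSup_le (E := EuclideanSpace ℝ (Fin 3)) (half_pos hν0) hα.le hρ
  refine ⟨C * (ν0 / 2)⁻¹, by positivity, fun t ht x => ?_⟩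
  have ht1 : 0 < 1 + t := by linarith
  set w := (1 + t) ^ (-α) * (1 + ‖x‖ ^ 2 / (1 + t)) ^ (-ρ)
  calc _ ≤ ∫ τ in (0 : ℝ)..t, C * w * exp (-(ν0 / 2) * (t - τ)) :=
        intervalIntegral_mono_on_of_nonneg ht (Continuous.intervalIntegrable (by fun_prop) _ _)
          (fun τ _ => by positivity) fun τ hτ => (hbound t τ hτ.1 hτ.2 x).trans_eq (by ring)
    _ = C * w * ∫ τ in (0 : ℝ)..t, exp (-(ν0 / 2) * (t - τ)) :=
        intervalIntegral.integral_const_mul _ _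
    _ ≤ C * w * (ν0 / 2)⁻¹ := by gcongr; exact integral_exp_neg_mul_sub_le (half_pos hν0)
    _ = _ := by ring
end
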